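/- arXiv:2512.18069 — 4 statements merged into one kernel-verified Lean document; each statement's English description precedes it below -/
import Mathlib

section
/- If w is a positive real-valued weighting function depending only on the confounders X^C with E[w(X^C) | A = a] = 1, and the confounders have marginal density f(x^C) and conditional density f(x^C | A = a), then the bias term ∫∫ μ_a(x^P, x^C) d[F(x^P, x^C) − F_w(x^P, x^C | A = a)] equals ∫ (∫ μ_a(x^P, x^C) f(x^P | x^C) dx^P) (f(x^C) − w(x^C) f(x^C | A = a)) dx^C; i.e., the contribution of precision variables to the bias factors through the conditional distribution of X^P given X^C and the bias depends only on the imbalance in the confounder distribution. -/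
open MeasureTheory ProbabilityTheory
open scoped ENNReal


private lemma bias_aux {α β : Type*} [MeasurableSpace α] [MeasurableSpace β]
    (ν : Measure β) [SigmaFinite ν]
    (κ : Kernel β α) [IsMarkovKernel κ]
    (g : β → ℝ) (hg : ∀ c, 0 ≤ g c) (hgm : Measurable g)
    (μa : β × α → ℝ) (hμmeas : Measurable μa)
    (hintF : Integrable μa ((ν.withDensity (fun c => ENNReal.ofReal (g c))) ⊗ₘ κ)) :
    (∫ z, μa z ∂((ν.withDensity (fun c => ENNReal.ofReal (g c))) ⊗ₘ κ))
      = ∫ c, g c * (∫ p, μa (c, p) ∂(κ c)) ∂ν ∧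
    Integrable (fun c => g c * (∫ p, μa (c, p) ∂(κ c))) ν := by
  have hρ : (fun c => ENNReal.ofReal (g c)) = fun c => ((fun c => (g c).toNNReal) c : ℝ≥0∞) := by
    ext c; simp [ENNReal.ofReal]
  have hgnn : Measurable fun c => (g c).toNNReal := hgm.real_toNNReal
  have hib : Integrable (fun c => ∫ p, μa (c, p) ∂(κ c))
      (ν.withDensity (fun c => ENNReal.ofReal (g c))) := by
    rw [Measure.integrable_compProd_iff hμmeas.aestronglyMeasurable] at hintF
    refine (hintF.2).mono ?_ ?_
    · exact (hμmeas.stronglyMeasurable.integral_kernel_prod_right').aestronglyMeasurable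
    · filter_upwards [hintF.1] with c hc
      simpa using (norm_integral_le_integral_norm fun p => μa (c, p)).trans (le_abs_self _)
  constructor
  · rw [Measure.integral_compProd hintF, hρ, integral_withDensity_eq_integral_smul hgnn]
    congr 1; ext c; simp [NNReal.smul_def, Real.coe_toNNReal _ (hg c)]
  · rw [hρ, integrable_withDensity_iff_integrable_smul hgnn] at hib
    simp only [NNReal.smul_def, smul_eq_mul] at hib
    refine hib.congr (Filter.Eventually.of_forall fun c => ?_)
    simp [Real.coe_toNNReal _ (hg c)]

/-- Bias decomposition (Theorem 1): if the weighting function `w` depends only on the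
confounders `X^C`, is positive, and satisfies `E[w(X^C) | A = a] = 1`, and the precision
variables satisfy `X^P ⊥ A | X^C` (encoded by the same conditional kernel `κ` of `X^P`
given `X^C` appearing in both the population joint law `F` with confounder density `fC`
and the weighted conditional law `Fw` with confounder density `w·fCA`), then
`∫∫ μ_a d[F - F_w] = ∫ (∫ μ_a(x^P,x^C) dF(x^P|x^C)) (fC(x^C) - w(x^C) fCA(x^C)) dx^C`:
the bias depends only on the imbalance of the confounder distribution. -/
theorem precision_variable_bias_decomposition
    {α β : Type*} [MeasurableSpace α] [MeasurableSpace β]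
    (ν : Measure β) [SigmaFinite ν]                 -- base measure for densities on 𝒳^C
    (κ : Kernel β α) [IsMarkovKernel κ]             -- conditional law of X^P given X^C
    (fC fCA : β → ℝ) (hfC : ∀ c, 0 ≤ fC c) (hfCA : ∀ c, 0 ≤ fCA c)
    (hfCmeas : Measurable fC) (hfCAmeas : Measurable fCA)
    (hfCint : ∫ c, fC c ∂ν = 1) (hfCAint : ∫ c, fCA c ∂ν = 1)
    (w : β → ℝ) (hwmeas : Measurable w) (hwpos : ∀ c, 0 < w c)
    (hwnorm : ∫ c, w c * fCA c ∂ν = 1)              -- E[w(X^C) | A = a] = 1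
    (μa : β × α → ℝ) (hμmeas : Measurable μa)
    (F Fw : Measure (β × α))
    (hF : F = (ν.withDensity (fun c => ENNReal.ofReal (fC c))) ⊗ₘ κ)
    (hFw : Fw = (ν.withDensity (fun c => ENNReal.ofReal (w c * fCA c))) ⊗ₘ κ)
    (hintF : Integrable μa F) (hintFw : Integrable μa Fw)
    (hint : Integrable (fun c => (∫ p, μa (c, p) ∂(κ c)) * (fC c - w c * fCA c)) ν) :
    (∫ z, μa z ∂F) - ∫ z, μa z ∂Fw
      = ∫ c, (∫ p, μa (c, p) ∂(κ c)) * (fC c - w c * fCA c) ∂ν := by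
  subst hF hFw
  obtain ⟨h1, h1i⟩ := bias_aux ν κ fC hfC hfCmeas μa hμmeas hintF
  obtain ⟨h2, h2i⟩ := bias_aux ν κ (fun c => w c * fCA c)
    (fun c => mul_nonneg (hwpos c).le (hfCA c)) (hwmeas.mul hfCAmeas) μa hμmeas hintFw
  rw [h1, h2, ← integral_sub h1i h2i]
  exact integral_congr_ae (Filter.Eventually.of_forall fun c => by ring)
end

section
/- For the depth-k uniform random partitioning tree on [0,1]^p in which at each of k recursive steps a coordinate is chosen uniformly at random and a split point is chosen uniformly over the current cell's range in that coordinate, the kernel K*(x, y) = P(y lies in the same leaf cell as x) is a continuous function of (x, y) on [0,1]^p × [0,1]^p. -/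
open MeasureTheory Classical

/-- `sameCell p splits lo hi x y` : after recursively applying the splits
`(j, u)` — split the current cell `[lo, hi]` in coordinate `j` at the point
`lo j + u * (hi j - lo j)` — the points `x` and `y` still lie in the same cell. -/
def sameCell (p : ℕ) : List (Fin p × ℝ) → (Fin p → ℝ) → (Fin p → ℝ) →
    (Fin p → ℝ) → (Fin p → ℝ) → Prop
  | [], _, _, _, _ => True
  | ju :: rest, lo, hi, x, y =>
      let s := lo ju.1 + ju.2 * (hi ju.1 - lo ju.1)
      if x ju.1 ≤ s ∧ y ju.1 ≤ s then
        sameCell p rest lo (Function.update hi ju.1 s) x y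
      else if s < x ju.1 ∧ s < y ju.1 then
        sameCell p rest (Function.update lo ju.1 s) hi x y
      else False

/-!
Let `K n (lo, hi, x, y)` be the probability that `n` random splits of the box `[lo, hi]` keep `x`
and `y` in the same cell. Conditioning on the first split `a` gives
`K (n + 1) (lo, hi, x, y) = ∫ K n (child box, x, y) dν(a)`, the integrand being `0` when the split
separates `x` from `y`. If the box is non-degenerate and the split point avoids `lo, hi, x, y` in
the split coordinate, which holds for almost every `a` because the split ratio has an atomless law,
the child box is again non-degenerate and the integrand is locally equal to a continuous function
of `(lo, hi, x, y)` by induction. Dominated convergence then makes `K (n + 1)` continuous. The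
kernel is `K k (0, 1, ·, ·)`, hence continuous on all of `ℝ^p × ℝ^p`.
-/

open Filter Function Set Topology

variable {p : ℕ}

def splitPoint (lo hi : Fin p → ℝ) (a : Fin p × ℝ) : ℝ :=
  lo a.1 + a.2 * (hi a.1 - lo a.1)

section SameCell

variable {a : Fin p × ℝ} {l : List (Fin p × ℝ)} {lo hi x y : Fin p → ℝ}

lemma sameCell_cons_of_le (hx : x a.1 ≤ splitPoint lo hi a) (hy : y a.1 ≤ splitPoint lo hi a) :
    sameCell p (a :: l) lo hi x y ↔ sameCell p l lo (update hi a.1 (splitPoint lo hi a)) x y := by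
  simp only [splitPoint] at hx hy
  simp [sameCell, splitPoint, hx, hy]

lemma sameCell_cons_of_lt (hx : splitPoint lo hi a < x a.1) (hy : splitPoint lo hi a < y a.1) :
    sameCell p (a :: l) lo hi x y ↔ sameCell p l (update lo a.1 (splitPoint lo hi a)) hi x y := by
  simp only [splitPoint] at hx hy
  simp [sameCell, splitPoint, hx, hy, hx.not_ge]

lemma not_sameCell_cons (h : ¬(x a.1 ≤ splitPoint lo hi a ↔ y a.1 ≤ splitPoint lo hi a)) :
    ¬sameCell p (a :: l) lo hi x y := by
  simp only [splitPoint] at h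
  simp only [sameCell]
  split_ifs with h₁ h₂
  · exact absurd (iff_of_true h₁.1 h₁.2) h
  · exact absurd (iff_of_false h₂.1.not_ge h₂.2.not_ge) h
  · exact id

end SameCell

lemma measurable_of_countable_index {α ι γ : Type*} [MeasurableSpace α] [MeasurableSpace ι]
    [MeasurableSpace γ] [Countable ι] [MeasurableSingletonClass ι] {i : α → ι} {G : ι → α → γ}
    (hi : Measurable i) (hG : ∀ j, Measurable (G j)) : Measurable fun z => G (i z) z :=
  (measurable_from_prod_countable_right (f := fun q : ι × α => G q.1 q.2) hG).comp
    (hi.prodMk measurable_id)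

lemma Measurable.sameCell_ofFn {α : Type*} [MeasurableSpace α] (x y : Fin p → ℝ) {n : ℕ}
    {ω : α → Fin n → Fin p × ℝ} {lo hi : α → Fin p → ℝ} (hω : Measurable ω) (hlo : Measurable lo)
    (hhi : Measurable hi) : Measurable fun z => sameCell p (List.ofFn (ω z)) (lo z) (hi z) x y := by
  induction n generalizing lo hi with
  | zero => simpa only [List.ofFn_zero, sameCell] using measurable_const
  | succ n ih =>
    simp only [List.ofFn_succ]
    refine measurable_of_countable_index (i := fun z => (ω z 0).1)
      (G := fun j z =>
        sameCell p ((j, (ω z 0).2) :: List.ofFn fun i => ω z i.succ) (lo z) (hi z) x y)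
      (by fun_prop) fun j => ?_
    have hs : Measurable fun z => lo z j + (ω z 0).2 * (hi z j - lo z j) := by fun_prop
    simp only [sameCell]
    refine Measurable.ite ?_ (ih (by fun_prop) (by fun_prop) (by fun_prop)) <|
      Measurable.ite ?_ (ih (by fun_prop) (by fun_prop) (by fun_prop)) measurable_const
    · exact (measurableSet_le (by fun_prop) hs).inter (measurableSet_le (by fun_prop) hs)
    · exact (measurableSet_lt hs (by fun_prop)).inter (measurableSet_lt hs (by fun_prop))

lemma measurableSet_setOf_sameCell (n : ℕ) (lo hi x y : Fin p → ℝ) :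
    MeasurableSet {ω : Fin n → Fin p × ℝ | sameCell p (List.ofFn ω) lo hi x y} :=
  measurableSet_setOfPred.2 <| .sameCell_ofFn x y measurable_id measurable_const measurable_const

lemma preimage_piFinSuccAbove_symm_setOf_sameCell (n : ℕ) (lo hi x y : Fin p → ℝ) :
    (MeasurableEquiv.piFinSuccAbove (fun _ : Fin (n + 1) => Fin p × ℝ) 0).symm ⁻¹'
        {ω | sameCell p (List.ofFn ω) lo hi x y} =
      {z | sameCell p (z.1 :: List.ofFn z.2) lo hi x y} := by
  ext z
  simp [List.ofFn_succ]

lemma measurableSet_setOf_sameCell_cons (n : ℕ) (lo hi x y : Fin p → ℝ) :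
    MeasurableSet {z : (Fin p × ℝ) × (Fin n → Fin p × ℝ) |
      sameCell p (z.1 :: List.ofFn z.2) lo hi x y} := by
  rw [← preimage_piFinSuccAbove_symm_setOf_sameCell]
  exact MeasurableEquiv.measurable _ (measurableSet_setOf_sameCell _ lo hi x y)

section CellProb

variable (ν : Measure (Fin p × ℝ))

noncomputable def cellProb (n : ℕ) (lo hi x y : Fin p → ℝ) : ℝ :=
  (Measure.pi fun _ : Fin n => ν).real {ω | sameCell p (List.ofFn ω) lo hi x y}

noncomputable def cellProbAfter (n : ℕ) (lo hi x y : Fin p → ℝ) (a : Fin p × ℝ) : ℝ :=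
  (Measure.pi fun _ : Fin n => ν).real {ω | sameCell p (a :: List.ofFn ω) lo hi x y}

variable {ν} {n : ℕ} {a : Fin p × ℝ} {lo hi x y : Fin p → ℝ}

lemma cellProbAfter_of_le (hx : x a.1 ≤ splitPoint lo hi a) (hy : y a.1 ≤ splitPoint lo hi a) :
    cellProbAfter ν n lo hi x y a = cellProb ν n lo (update hi a.1 (splitPoint lo hi a)) x y := by
  simp only [cellProbAfter, cellProb, sameCell_cons_of_le hx hy]

lemma cellProbAfter_of_lt (hx : splitPoint lo hi a < x a.1) (hy : splitPoint lo hi a < y a.1) :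
    cellProbAfter ν n lo hi x y a = cellProb ν n (update lo a.1 (splitPoint lo hi a)) hi x y := by
  simp only [cellProbAfter, cellProb, sameCell_cons_of_lt hx hy]

lemma cellProbAfter_of_not_iff
    (h : ¬(x a.1 ≤ splitPoint lo hi a ↔ y a.1 ≤ splitPoint lo hi a)) :
    cellProbAfter ν n lo hi x y a = 0 := by
  simp [cellProbAfter, not_sameCell_cons h]

variable [IsFiniteMeasure ν]

lemma cellProbAfter_le :
    cellProbAfter ν n lo hi x y a ≤ (Measure.pi fun _ : Fin n => ν).real univ :=
  measureReal_mono (subset_univ _)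

lemma measurable_cellProbAfter (n : ℕ) (lo hi x y : Fin p → ℝ) :
    Measurable (cellProbAfter ν n lo hi x y) :=
  (measurable_measure_prodMk_left (measurableSet_setOf_sameCell_cons n lo hi x y)).ennreal_toReal

lemma cellProb_succ (n : ℕ) (lo hi x y : Fin p → ℝ) :
    cellProb ν (n + 1) lo hi x y = ∫ a, cellProbAfter ν n lo hi x y a ∂ν := by
  have he := (measurePreserving_piFinSuccAbove (fun _ : Fin (n + 1) => ν) 0).symm
  rw [cellProb, measureReal_def,
    ← he.measure_preimage (measurableSet_setOf_sameCell ..).nullMeasurableSet,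
    preimage_piFinSuccAbove_symm_setOf_sameCell,
    Measure.prod_apply (measurableSet_setOf_sameCell_cons n lo hi x y),
    ← integral_toReal (measurable_measure_prodMk_left
      (measurableSet_setOf_sameCell_cons n lo hi x y)).aemeasurable
      (ae_of_all _ fun _ => measure_lt_top _ _)]
  rfl

end CellProb

lemma eventually_le_iff_of_ne {X α : Type*} [TopologicalSpace X] [LinearOrder α]
    [TopologicalSpace α] [OrderClosedTopology α] {f g : X → α} {x₀ : X} (hf : ContinuousAt f x₀)
    (hg : ContinuousAt g x₀) (h : f x₀ ≠ g x₀) : ∀ᶠ x in 𝓝 x₀, (f x ≤ g x ↔ f x₀ ≤ g x₀) := by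
  rcases h.lt_or_gt with h | h
  · filter_upwards [hf.eventually_lt hg h] with x hx
    exact iff_of_true hx.le h.le
  · filter_upwards [hg.eventually_lt hf h] with x hx
    exact iff_of_false hx.not_ge h.not_ge

lemma forall_ne_update {ι α : Type*} [DecidableEq ι] {f g : ι → α} {i : ι} {t : α}
    (h : ∀ j, f j ≠ g j) (ht : f i ≠ t) (j : ι) : f j ≠ update g i t j := by
  rcases eq_or_ne j i with rfl | hj
  · simpa using ht
  · simpa [hj] using h j

lemma ae_splitPoint_ne {ν : Measure (Fin p × ℝ)} [NullSingletonClass (ν.map Prod.snd)]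
    {lo hi : Fin p → ℝ} (h : ∀ j, lo j ≠ hi j) (x : Fin p → ℝ) :
    ∀ᵐ a ∂ν, splitPoint lo hi a ≠ x a.1 := by
  have hrange : ∀ᵐ a ∂ν, a.2 ∉ range fun j => (x j - lo j) / (hi j - lo j) :=
    ae_of_ae_map measurable_snd.aemeasurable ((finite_range _).countable.ae_notMem _)
  filter_upwards [hrange] with a ha hx
  refine ha ⟨a.1, ?_⟩
  rw [div_eq_iff (sub_ne_zero.2 (h a.1).symm), ← hx, splitPoint]
  ring

-- a box `[lo, hi]` together with the two points `x`, `y`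
local notation "Cell" p => (Fin p → ℝ) × (Fin p → ℝ) × (Fin p → ℝ) × (Fin p → ℝ)

variable {ν : Measure (Fin p × ℝ)}

lemma continuousAt_cellProbAfter {n : ℕ}
    (ih : ∀ {lo hi : Fin p → ℝ} (x y : Fin p → ℝ), (∀ j, lo j ≠ hi j) →
      ContinuousAt (fun q : Cell p => cellProb ν n q.1 q.2.1 q.2.2.1 q.2.2.2) (lo, hi, x, y))
    {a : Fin p × ℝ} {lo hi x y : Fin p → ℝ} (h : ∀ j, lo j ≠ hi j)
    (hlo : splitPoint lo hi a ≠ lo a.1) (hhi : splitPoint lo hi a ≠ hi a.1)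
    (hx : splitPoint lo hi a ≠ x a.1) (hy : splitPoint lo hi a ≠ y a.1) :
    ContinuousAt (fun q : Cell p => cellProbAfter ν n q.1 q.2.1 q.2.2.1 q.2.2.2 a)
      (lo, hi, x, y) := by
  set s := splitPoint lo hi a
  have hs : Continuous fun q : Cell p => splitPoint q.1 q.2.1 a := by
    unfold splitPoint; fun_prop
  have hxq : ∀ᶠ q : Cell p in 𝓝 (lo, hi, x, y),
      (q.2.2.1 a.1 ≤ splitPoint q.1 q.2.1 a ↔ x a.1 ≤ s) :=
    eventually_le_iff_of_ne (by fun_prop) hs.continuousAt hx.symm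
  have hyq : ∀ᶠ q : Cell p in 𝓝 (lo, hi, x, y),
      (q.2.2.2 a.1 ≤ splitPoint q.1 q.2.1 a ↔ y a.1 ≤ s) :=
    eventually_le_iff_of_ne (by fun_prop) hs.continuousAt hy.symm
  by_cases hxy : x a.1 ≤ s ↔ y a.1 ≤ s
  · by_cases hxs : x a.1 ≤ s
    · refine ((ih x y (forall_ne_update h hlo.symm)).comp_of_eq
        (f := fun q : Cell p => (q.1, update q.2.1 a.1 (splitPoint q.1 q.2.1 a), q.2.2.1, q.2.2.2))
        (by fun_prop) rfl).congr ?_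
      filter_upwards [hxq, hyq] with q hqx hqy
      exact (cellProbAfter_of_le (hqx.2 hxs) (hqy.2 (hxy.1 hxs))).symm
    · have hupd := forall_ne_update (fun j => (h j).symm) hhi.symm
      refine ((ih x y fun j => (hupd j).symm).comp_of_eq
        (f := fun q : Cell p => (update q.1 a.1 (splitPoint q.1 q.2.1 a), q.2.1, q.2.2.1, q.2.2.2))
        (by fun_prop) rfl).congr ?_
      filter_upwards [hxq, hyq] with q hqx hqy
      exact (cellProbAfter_of_lt (not_le.1 (hxs ∘ hqx.1))
        (not_le.1 (hxs ∘ hxy.2 ∘ hqy.1))).symm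
  · refine (continuousAt_const (y := 0)).congr ?_
    filter_upwards [hxq, hyq] with q hqx hqy
    exact (cellProbAfter_of_not_iff (by rwa [hqx, hqy])).symm

theorem continuousAt_cellProb [IsFiniteMeasure ν] [NullSingletonClass (ν.map Prod.snd)] (n : ℕ)
    {lo hi : Fin p → ℝ} (x y : Fin p → ℝ) (h : ∀ j, lo j ≠ hi j) :
    ContinuousAt (fun q : Cell p => cellProb ν n q.1 q.2.1 q.2.2.1 q.2.2.2) (lo, hi, x, y) := by
  induction n generalizing lo hi x y with
  | zero => simpa [cellProb, sameCell] using continuousAt_const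
  | succ n ih =>
    simp only [cellProb_succ]
    refine continuousAt_of_dominated (bound := fun _ => (Measure.pi fun _ : Fin n => ν).real univ)
      (.of_forall fun q => (measurable_cellProbAfter ..).aestronglyMeasurable)
      (.of_forall fun q => .of_forall fun a => ?_) (integrable_const _) ?_
    · exact (Real.norm_of_nonneg measureReal_nonneg).trans_le cellProbAfter_le
    · filter_upwards [ae_splitPoint_ne h lo, ae_splitPoint_ne h hi, ae_splitPoint_ne h x,
        ae_splitPoint_ne h y] with a hlo hhi hx hy
      exact continuousAt_cellProbAfter ih h hlo hhi hx hy

/-- For the depth-`k` uniform random partitioning tree on `[0,1]^p` (at each of the `k`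
steps a coordinate is chosen uniformly at random and a split point uniformly over the
current cell's range in that coordinate), the kernel
`K*(x,y) = P(y lies in the same leaf cell as x)` is a continuous function of `(x,y)` on
`[0,1]^p × [0,1]^p`. -/
theorem depth_k_uniform_partition_kernel_continuous
    (p k : ℕ) [NeZero p]
    (μ : Measure (Fin k → Fin p × ℝ))
    (hμ : μ = Measure.pi fun _ =>
      (PMF.uniformOfFintype (Fin p)).toMeasure.prod (volume.restrict (Set.Icc (0:ℝ) 1)))
    (Kstar : (Fin p → ℝ) → (Fin p → ℝ) → ℝ)
    (hKstar : ∀ x y, Kstar x y =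
      (μ {ω | sameCell p (List.ofFn ω) (fun _ => (0:ℝ)) (fun _ => (1:ℝ)) x y}).toReal) :
    ContinuousOn (fun q : (Fin p → ℝ) × (Fin p → ℝ) => Kstar q.1 q.2)
      ((Set.univ.pi fun _ => Set.Icc (0:ℝ) 1) ×ˢ (Set.univ.pi fun _ => Set.Icc (0:ℝ) 1)) := by
  set ν := (PMF.uniformOfFintype (Fin p)).toMeasure.prod (volume.restrict (Set.Icc (0:ℝ) 1))
  have : NullSingletonClass (ν.map Prod.snd) := by
    rw [Measure.map_snd_prod, measure_univ, one_smul]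
    infer_instance
  have hK : (fun q : (Fin p → ℝ) × (Fin p → ℝ) => Kstar q.1 q.2) =
      fun q => cellProb ν k 0 1 q.1 q.2 := by
    ext q
    rw [hKstar, hμ]
    rfl
  rw [hK]
  refine (continuous_iff_continuousAt.2 fun q => ?_).continuousOn
  exact (continuousAt_cellProb (ν := ν) k q.1 q.2 fun _ => zero_ne_one).comp_of_eq
    (f := fun q : (Fin p → ℝ) × (Fin p → ℝ) => ((0 : Fin p → ℝ), (1 : Fin p → ℝ), q.1, q.2))
    (by fun_prop) rfl
end

section
/- The kernel K(x, y) = 1 − |x − y| on [0,1] is universal: the span of {K(y, ·) : y ∈ Z} is dense in C(Z) with respect to the sup norm, for every compact Z ⊆ [0,1]. -/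
/-!
Since `K y z = 1 - |y - z|`, every function in the span of the sections `K y`, `y ∈ T`, is affine
between consecutive points of `T`. If `T` has spread `< 2`, these functions interpolate arbitrary
values on `T`: adding a new maximum `b` to `T` with minimum `u` and maximum `a`, the combination
`(2 - (a - u)) (K b - K a) + (b - a) (K u + K a)` vanishes on `T` but not at `b`.
Interpolating `f` on a finite `T ⊆ Z` that has points within `δ` of every `z ∈ Z` on both sides
then writes the interpolant at `z` as a convex combination of values of `f` near `f z`.
-/

open Set Submodule

def splitKernel (y z : ℝ) : ℝ := 1 - |y - z|

theorem splitKernel_add_splitKernel_of_mem_Icc {u a x : ℝ} (hx : x ∈ Icc u a) :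
    splitKernel u x + splitKernel a x = 2 - (a - u) := by
  simp only [splitKernel, abs_of_nonpos (sub_nonpos.2 hx.1), abs_of_nonneg (sub_nonneg.2 hx.2)]
  ring

theorem exists_mem_span_splitKernel_eqOn_zero {T : Finset ℝ} (hT : T.Nonempty) {b : ℝ}
    (hb : ∀ x ∈ T, x < b) (hbT : b - T.min' hT < 2) :
    ∃ φ ∈ span ℝ (splitKernel '' ↑(insert b T)), EqOn φ 0 T ∧ φ b ≠ 0 := by
  set u := T.min' hT
  set a := T.max' hT
  have hab : a < b := hb a (T.max'_mem hT)
  have mem : ∀ x ∈ insert b T, splitKernel x ∈ span ℝ (splitKernel '' ↑(insert b T)) :=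
    fun x hx => subset_span (mem_image_of_mem _ hx)
  have hu := mem u (Finset.mem_insert_of_mem (T.min'_mem hT))
  have ha := mem a (Finset.mem_insert_of_mem (T.max'_mem hT))
  -- on `[u, a]`, `K b - K a = a - b` and `K u + K a = 2 - (a - u)`
  refine ⟨(2 - (a - u)) • (splitKernel b - splitKernel a) +
      (b - a) • (splitKernel u + splitKernel a),
    add_mem (smul_mem _ _ (sub_mem (mem b (Finset.mem_insert_self b T)) ha))
      (smul_mem _ _ (add_mem hu ha)), fun x hx => ?_, ?_⟩
  · have hxa : x ∈ Icc u a := ⟨T.min'_le x hx, T.le_max' x hx⟩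
    have hsum := splitKernel_add_splitKernel_of_mem_Icc hxa
    simp only [Pi.add_apply, Pi.smul_apply, Pi.sub_apply, smul_eq_mul, Pi.zero_apply, hsum]
    simp only [splitKernel, abs_of_nonneg (sub_nonneg.2 (hxa.2.trans hab.le)),
      abs_of_nonneg (sub_nonneg.2 hxa.2)]
    ring
  · have hub : u < b := hb u (T.min'_mem hT)
    simp only [Pi.add_apply, Pi.smul_apply, Pi.sub_apply, smul_eq_mul, splitKernel, sub_self,
      abs_zero, abs_of_neg (sub_neg.2 hab), abs_of_neg (sub_neg.2 hub)]
    have : (b - a) * (2 * (2 - (b - u))) ≠ 0 := by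
      have : 0 < b - a := sub_pos.2 hab
      have : 0 < 2 - (b - u) := by linarith
      positivity
    convert this using 1
    ring

theorem exists_mem_span_splitKernel_eqOn (T : Finset ℝ) (hT : ∀ s ∈ T, ∀ t ∈ T, dist s t < 2)
    (V : ℝ → ℝ) : ∃ g ∈ span ℝ (splitKernel '' T), EqOn g V T := by
  induction T using Finset.induction_on_max generalizing V with
  | empty => exact ⟨0, zero_mem _, by simp⟩
  | insert b T hb ih =>
    rcases T.eq_empty_or_nonempty with rfl | hne
    · refine ⟨V b • splitKernel b, smul_mem _ _ (subset_span (by simp)), ?_⟩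
      simp [EqOn, splitKernel]
    obtain ⟨g, hg, hgV⟩ := ih (fun s hs t ht => hT s (by simp [hs]) t (by simp [ht])) V
    have hbu := hT b (Finset.mem_insert_self b T) _ (Finset.mem_insert_of_mem (T.min'_mem hne))
    rw [Real.dist_eq] at hbu
    obtain ⟨φ, hφ, hφT, hφb⟩ :=
      exists_mem_span_splitKernel_eqOn_zero hne hb ((le_abs_self _).trans_lt hbu)
    have hTb : splitKernel '' ↑T ⊆ splitKernel '' ↑(insert b T) :=
      image_mono (Finset.coe_subset.2 (Finset.subset_insert b T))
    refine ⟨g + ((V b - g b) / φ b) • φ, add_mem (span_mono hTb hg) (smul_mem _ _ hφ),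
      fun x hx => ?_⟩
    rcases Finset.mem_insert.1 hx with rfl | hx
    · simp [hφb]
    · simp [hgV hx, hφT hx]

theorem apply_convexComb_of_mem_span_splitKernel {S : Set ℝ} {g : ℝ → ℝ}
    (hg : g ∈ span ℝ (splitKernel '' S)) {a b : ℝ} (hab : a ≤ b) (hS : ∀ y ∈ S, y ≤ a ∨ b ≤ y)
    {s t : ℝ} (hs : 0 ≤ s) (ht : 0 ≤ t) (hst : s + t = 1) :
    g (s • a + t • b) = s • g a + t • g b := by
  induction hg using span_induction with
  | mem _ hk =>
    obtain ⟨y, hy, rfl⟩ := hk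
    simp only [splitKernel, smul_eq_mul]
    have hmid : s • a + t • b ∈ Icc a b := segment_eq_Icc hab ▸ ⟨s, t, hs, ht, hst, rfl⟩
    simp only [smul_eq_mul] at hmid
    rcases hS y hy with hya | hby
    · rw [abs_of_nonpos (by linarith [hmid.1]), abs_of_nonpos (by linarith),
        abs_of_nonpos (by linarith)]
      linear_combination -(1 + y) * hst
    · rw [abs_of_nonneg (by linarith [hmid.2]), abs_of_nonneg (by linarith),
        abs_of_nonneg (by linarith)]
      linear_combination (y - 1) * hst
  | zero => simp
  | add _ _ _ _ h₁ h₂ => simp only [Pi.add_apply, h₁, h₂]; module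
  | smul r _ _ h => simp only [Pi.smul_apply, h]; module

theorem Finset.exists_gap_bracket {α : Type*} [LinearOrder α] {T : Finset α} {p q z : α}
    (hp : p ∈ T) (hq : q ∈ T) (hpz : p ≤ z) (hzq : z ≤ q) :
    ∃ a ∈ T, ∃ b ∈ T, p ≤ a ∧ a ≤ z ∧ z ≤ b ∧ b ≤ q ∧ ∀ y ∈ T, y ≤ a ∨ b ≤ y := by
  have hlo : (T.filter (· ≤ z)).Nonempty := ⟨p, mem_filter.2 ⟨hp, hpz⟩⟩
  have hhi : (T.filter (z ≤ ·)).Nonempty := ⟨q, mem_filter.2 ⟨hq, hzq⟩⟩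
  obtain ⟨haT, haz⟩ := mem_filter.1 ((T.filter (· ≤ z)).max'_mem hlo)
  obtain ⟨hbT, hzb⟩ := mem_filter.1 ((T.filter (z ≤ ·)).min'_mem hhi)
  refine ⟨_, haT, _, hbT, le_max' _ p (mem_filter.2 ⟨hp, hpz⟩), haz, hzb,
    min'_le _ q (mem_filter.2 ⟨hq, hzq⟩), fun y hy => ?_⟩
  rcases le_total y z with hyz | hzy
  · exact Or.inl (le_max' _ y (mem_filter.2 ⟨hy, hyz⟩))
  · exact Or.inr (min'_le _ y (mem_filter.2 ⟨hy, hzy⟩))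

theorem IsCompact.exists_finset_bracketing {Z : Set ℝ} (hZ : IsCompact Z) {δ : ℝ} (hδ : 0 < δ) :
    ∃ T : Finset ℝ, ↑T ⊆ Z ∧
      ∀ z ∈ Z, ∃ p ∈ T, ∃ q ∈ T, p ≤ z ∧ z ≤ q ∧ z - p < δ ∧ q - z < δ := by
  obtain ⟨N, hNZ, hN, hcov⟩ := hZ.finite_cover_balls (half_pos hδ)
  have hextreme (x : ℝ) (hx : x ∈ N) :
      IsLeast (Z ∩ Metric.closedBall x (δ / 2)) (sInf (Z ∩ Metric.closedBall x (δ / 2))) ∧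
      IsGreatest (Z ∩ Metric.closedBall x (δ / 2)) (sSup (Z ∩ Metric.closedBall x (δ / 2))) := by
    have hc := hZ.inter_right (Metric.isClosed_closedBall (x := x) (ε := δ / 2))
    have hne : (Z ∩ Metric.closedBall x (δ / 2)).Nonempty :=
      ⟨x, hNZ hx, Metric.mem_closedBall_self (half_pos hδ).le⟩
    exact ⟨hc.isLeast_sInf hne, hc.isGreatest_sSup hne⟩
  classical
  refine ⟨hN.toFinset.image (fun x => sInf (Z ∩ Metric.closedBall x (δ / 2))) ∪
    hN.toFinset.image (fun x => sSup (Z ∩ Metric.closedBall x (δ / 2))), ?_, fun z hz => ?_⟩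
  · intro y hy
    simp only [Finset.coe_union, Finset.coe_image, Set.Finite.coe_toFinset, mem_union,
      mem_image] at hy
    rcases hy with ⟨x, hx, rfl⟩ | ⟨x, hx, rfl⟩
    exacts [(hextreme x hx).1.1.1, (hextreme x hx).2.1.1]
  obtain ⟨x, hx, hzx⟩ := mem_iUnion₂.1 (hcov hz)
  obtain ⟨⟨⟨-, hlo⟩, hlez⟩, ⟨⟨-, hhi⟩, hzle⟩⟩ := hextreme x hx
  have hzx' : z ∈ Z ∩ Metric.closedBall x (δ / 2) := ⟨hz, Metric.ball_subset_closedBall hzx⟩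
  rw [Metric.mem_ball, Real.dist_eq, abs_lt] at hzx
  rw [Metric.mem_closedBall, Real.dist_eq, abs_le] at hlo hhi
  refine ⟨_, Finset.mem_union_left _ (Finset.mem_image_of_mem _ (hN.mem_toFinset.2 hx)),
    _, Finset.mem_union_right _ (Finset.mem_image_of_mem _ (hN.mem_toFinset.2 hx)),
    hlez hzx', hzle hzx', by linarith, by linarith⟩

theorem exists_mem_span_splitKernel_dist_lt {Z : Set ℝ} (hZc : IsCompact Z)
    (hZ : ∀ s ∈ Z, ∀ t ∈ Z, dist s t < 2) {f : ℝ → ℝ} (hf : ContinuousOn f Z) {ε : ℝ}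
    (hε : 0 < ε) : ∃ g ∈ span ℝ (splitKernel '' Z), ∀ z ∈ Z, dist (g z) (f z) < ε := by
  obtain ⟨δ, hδ, hfδ⟩ :=
    Metric.uniformContinuousOn_iff.1 (hZc.uniformContinuousOn_of_continuous hf) ε hε
  obtain ⟨T, hTZ, hT⟩ := hZc.exists_finset_bracketing hδ
  obtain ⟨g, hg, hgf⟩ :=
    exists_mem_span_splitKernel_eqOn T (fun s hs t ht => hZ s (hTZ hs) t (hTZ ht)) f
  refine ⟨g, span_mono (image_mono hTZ) hg, fun z hz => ?_⟩
  obtain ⟨p, hp, q, hq, hpz, hzq, hzp, hqz⟩ := hT z hz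
  obtain ⟨a, ha, b, hb, hpa, haz, hzb, hbq, hgap⟩ := Finset.exists_gap_bracket hp hq hpz hzq
  have hfa : dist (f a) (f z) < ε := by
    rw [dist_comm]
    exact hfδ z hz a (hTZ ha) (by rw [Real.dist_eq, abs_of_nonneg (by linarith)]; linarith)
  have hfb : dist (f b) (f z) < ε := by
    rw [dist_comm]
    exact hfδ z hz b (hTZ hb) (by rw [Real.dist_eq, abs_of_nonpos (by linarith)]; linarith)
  obtain ⟨s, t, hs, ht, hst, rfl⟩ : z ∈ segment ℝ a b := by
    rw [segment_eq_Icc (haz.trans hzb)]; exact ⟨haz, hzb⟩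
  rw [apply_convexComb_of_mem_span_splitKernel hg (haz.trans hzb) hgap hs ht hst, hgf ha, hgf hb]
  exact convex_ball (f (s • a + t • b)) ε hfa hfb hs ht hst

/-- Universality of the kernel `K(x,y) = 1 - |x - y|` on `[0,1]`: for every compact
`Z ⊆ [0,1]`, the span of the kernel sections `{K(y, ·) : y ∈ Z}` is dense in `C(Z)`
with respect to the sup norm. -/
theorem uniform_split_kernel_universal (Z : Set ℝ) (hZ : Z ⊆ Set.Icc (0:ℝ) 1)
    (hZc : IsCompact Z) (f : ℝ → ℝ) (hf : ContinuousOn f Z) (ε : ℝ) (hε : 0 < ε) :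
    ∃ (m : ℕ) (y : Fin m → ℝ) (c : Fin m → ℝ), (∀ i, y i ∈ Z) ∧
      ∀ z ∈ Z, |f z - ∑ i, c i * (1 - |y i - z|)| < ε := by
  have hdiam : ∀ s ∈ Z, ∀ t ∈ Z, dist s t < 2 := fun s hs t ht =>
    (Real.dist_le_of_mem_Icc_01 (hZ hs) (hZ ht)).trans_lt one_lt_two
  obtain ⟨g, hg, hgf⟩ := exists_mem_span_splitKernel_dist_lt hZc hdiam hf hε
  obtain ⟨m, c, k, rfl⟩ := mem_span_set'.1 hg
  choose y hyZ hy using fun i => (k i).2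
  refine ⟨m, y, c, hyZ, fun z hz => ?_⟩
  have := hgf z hz
  simp only [← hy, Finset.sum_apply, Pi.smul_apply, smul_eq_mul, splitKernel] at this
  rwa [Real.dist_eq, abs_sub_comm] at this
end

section
/- Let K be a bounded positive-definite kernel on X with sup_{x} K(x,x) ≤ B, let P and Q be probability measures on X, and let H be the RKHS of K. If MMD_H(P, Q) = 0 and K is universal (its sections span a dense subspace of C(Z) for every compact Z) and P, Q are supported on a compact set Z, then P = Q. -/
open MeasureTheory

/-- Auxiliary: a continuous function is integrable w.r.t. a finite measure supported on a
compact set. -/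
lemma integrable_of_continuous_of_compactSupp
    {X : Type*} [MetricSpace X] [MeasurableSpace X] [BorelSpace X]
    (μ : Measure X) [IsFiniteMeasure μ] {Z : Set X} (hZ : IsCompact Z) (hμZ : μ Zᶜ = 0)
    {h : X → ℝ} (hh : Continuous h) : Integrable h μ := by
  obtain ⟨C, hC⟩ := hZ.exists_bound_of_continuousOn hh.continuousOn
  refine (integrable_const C).mono' hh.aestronglyMeasurable ?_
  refine (measure_mono_null ?_ hμZ : μ {x | ¬ ‖h x‖ ≤ C} = 0)
  intro x hx
  simp only [Set.mem_setOf_eq] at hx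
  exact fun hxZ => hx (hC x hxZ)

/-- Universal kernels are characteristic on compact sets: if `K` is a bounded, continuous,
symmetric, positive-definite universal kernel, `P, Q` are probability measures supported
on a compact set `Z`, and `MMD_H(P,Q) = 0` (equivalently, the kernel mean embeddings
agree: `∫ K(x,·) dP = ∫ K(x,·) dQ`), then `P = Q`. -/
theorem universal_kernel_characteristic
    {X : Type*} [MetricSpace X] [MeasurableSpace X] [BorelSpace X]
    (K : X → X → ℝ)
    (hKcont : Continuous fun p : X × X => K p.1 p.2)
    (hKsymm : ∀ x y, K x y = K y x)
    (B : ℝ) (hKbdd : ∀ x, K x x ≤ B)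
    (hpd : ∀ (n : ℕ) (x : Fin n → X) (c : Fin n → ℝ),
      0 ≤ ∑ i, ∑ j, c i * c j * K (x i) (x j))
    -- universality: kernel sections span a dense subspace of C(Z) for every compact Z
    (huniv : ∀ (Z : Set X), IsCompact Z → ∀ (f : X → ℝ), ContinuousOn f Z →
      ∀ ε > (0:ℝ), ∃ (m : ℕ) (y : Fin m → X) (c : Fin m → ℝ), (∀ i, y i ∈ Z) ∧
        ∀ z ∈ Z, |f z - ∑ i, c i * K (y i) z| < ε)
    (P Q : Measure X) [IsProbabilityMeasure P] [IsProbabilityMeasure Q]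
    (Z : Set X) (hZ : IsCompact Z) (hPZ : P Zᶜ = 0) (hQZ : Q Zᶜ = 0)
    -- MMD_H(P,Q) = 0: the kernel mean embeddings of P and Q coincide
    (hMMD : ∀ y, ∫ x, K x y ∂P = ∫ x, K x y ∂Q) :
    P = Q := by
  -- Step 1: all bounded continuous real functions have equal integrals.
  have key : ∀ f : BoundedContinuousFunction X ℝ, ∫ x, f x ∂P = ∫ x, f x ∂Q := by
    intro f
    have hint : ∀ ε > (0:ℝ), |∫ x, f x ∂P - ∫ x, f x ∂Q| ≤ 2 * ε := by
      intro ε hε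
      obtain ⟨m, y, c, hyZ, happx⟩ := huniv Z hZ f f.continuous.continuousOn ε hε
      set g : X → ℝ := fun z => ∑ i, c i * K (y i) z with hg
      have hgcont : Continuous g := by
        apply continuous_finset_sum
        intro i _
        exact (hKcont.comp (continuous_const.prodMk continuous_id)).const_smul (c i)
      -- the integrals of g agree
      have hsec : ∀ i : Fin m, Continuous fun z => K (y i) z := fun i =>
        hKcont.comp (continuous_const.prodMk continuous_id)
      have hgPQ : ∫ x, g x ∂P = ∫ x, g x ∂Q := by
        rw [hg]
        rw [integral_finset_sum _ (fun i _ => (integrable_of_continuous_of_compactSupp P hZ hPZ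
              (hsec i)).const_mul (c i)),
            integral_finset_sum _ (fun i _ => (integrable_of_continuous_of_compactSupp Q hZ hQZ
              (hsec i)).const_mul (c i))]
        refine Finset.sum_congr rfl fun i _ => ?_
        rw [integral_const_mul, integral_const_mul]
        have : ∀ μ : Measure X, ∫ z, K (y i) z ∂μ = ∫ z, K z (y i) ∂μ := by
          intro μ; exact integral_congr_ae (Filter.Eventually.of_forall fun z => hKsymm (y i) z)
        rw [this P, this Q, hMMD (y i)]
      -- a.e. bounds for |f - g|
      have habd : ∀ (μ : Measure X), μ Zᶜ = 0 → ∀ᵐ x ∂μ, ‖f x - g x‖ ≤ ε := by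
        intro μ hμZ
        refine (measure_mono_null ?_ hμZ : μ {x | ¬ ‖f x - g x‖ ≤ ε} = 0)
        intro x hx
        simp only [Set.mem_setOf_eq] at hx
        exact fun hxZ => hx (le_of_lt (by simpa [g] using happx x hxZ))
      have hIf : ∀ (μ : Measure X) [IsProbabilityMeasure μ], μ Zᶜ = 0 →
          |∫ x, f x ∂μ - ∫ x, g x ∂μ| ≤ ε := by
        intro μ _ hμZ
        rw [← integral_sub (f.integrable μ)
          (integrable_of_continuous_of_compactSupp μ hZ hμZ hgcont)]
        calc |∫ x, f x - g x ∂μ| ≤ ε * (μ Set.univ).toReal :=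
              norm_integral_le_of_norm_le_const (habd μ hμZ)
          _ = ε := by simp
      calc |∫ x, f x ∂P - ∫ x, f x ∂Q|
          = |(∫ x, f x ∂P - ∫ x, g x ∂P) + (∫ x, g x ∂Q - ∫ x, f x ∂Q)| := by
            rw [hgPQ]; ring_nf
        _ ≤ |∫ x, f x ∂P - ∫ x, g x ∂P| + |∫ x, g x ∂Q - ∫ x, f x ∂Q| := abs_add_le _ _
        _ ≤ ε + ε := add_le_add (hIf P hPZ) (by rw [abs_sub_comm]; exact hIf Q hQZ)
        _ = 2 * ε := by ring
    have : |∫ x, f x ∂P - ∫ x, f x ∂Q| ≤ 0 := by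
      refine le_of_forall_pos_le_add fun ε hε => ?_
      have := hint (ε / 2) (by positivity)
      linarith
    have := abs_nonpos_iff.mp this
    linarith [this]
  -- Step 2: conclude equality of measures via lintegrals of `ℝ≥0`-valued functions.
  refine ext_of_forall_lintegral_eq_of_IsFiniteMeasure fun f => ?_
  have h1 : (∫⁻ x, f x ∂P).toReal = (∫⁻ x, f x ∂Q).toReal := by
    rw [BoundedContinuousFunction.toReal_lintegral_coe_eq_integral,
        BoundedContinuousFunction.toReal_lintegral_coe_eq_integral]
    exact key ⟨⟨fun x => (f x : ℝ), NNReal.continuous_coe.comp f.continuous⟩, f.map_bounded'⟩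
  exact (ENNReal.toReal_eq_toReal_iff' (BoundedContinuousFunction.lintegral_lt_top_of_nnreal P f).ne
    (BoundedContinuousFunction.lintegral_lt_top_of_nnreal Q f).ne).mp h1
end
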